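/- Let m > n > 0. Then ∫₀^{m−n} p² / √( 4mn(m − n)² + ((m − n)² − 4mn)p² − p⁴ ) dp = 2m·E(√(m² − n²)/m) − (m + n)·E((m − n)/(m + n)), where E(k) = ∫₀^{π/2} √(1 − k² sin²θ) dθ is the complete elliptic integral of the second kind. -/

import Mathlib

/-!
Substituting `p = (m - n) sin θ` and then `θ ↦ π/2 - θ` turns the excess into
`∫₀^{π/2} (G - 4mn / G)` with `G(θ)² = (m + n)² cos² θ + 4mn sin² θ`, that is `S₁ - 4mn I`
where `I = ∫₀^{π/2} dθ / G` is Gauss's integral. Landen's substitution `u = ψ(t)`,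
`tan (ψ - t) = (n / m) tan t`, maps `[0, π/2]` onto `[0, π]` and turns `(G - 2mn / G)(u) du` into
`2 √(m² cos² t + n² sin² t) dt` plus an exact differential; as `G(π - u) = G(u)`, this gives
`2 (S₁ - 2mn I) = 2 S₂`. Eliminating `I` yields `2 S₂ - S₁`.
-/

open Real

/-- Complete elliptic integral of the second kind. -/
noncomputable def ellipticE (k : ℝ) : ℝ :=
  ∫ θ in (0:ℝ)..(π / 2), Real.sqrt (1 - k ^ 2 * Real.sin θ ^ 2)

open intervalIntegral MeasureTheory Set

noncomputable section

def trigQuad (A B t : ℝ) : ℝ := A * cos t ^ 2 + B * sin t ^ 2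

/-- With `A = a²` and `B = b²`, `arcIntegral A B` is the quadrantal arc of the ellipse with
semiaxes `a`, `b`, and `invArcIntegral A B` is Gauss's integral
`∫ dt / √(a² cos² t + b² sin² t)`. -/
def arcIntegral (A B : ℝ) : ℝ := ∫ t in (0:ℝ)..π / 2, √(trigQuad A B t)

def invArcIntegral (A B : ℝ) : ℝ := ∫ t in (0:ℝ)..π / 2, (√(trigQuad A B t))⁻¹

/-- `tan (landenAngle m n t - t) = (n / m) * tan t`, written with `arctan` of a ratio whose
denominator does not vanish, so that it is smooth on all of `ℝ`. -/
def landenAngle (m n t : ℝ) : ℝ := 2 * t - arctan ((m - n) * sin t * cos t / trigQuad m n t)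

end

lemma trigQuad_pos {A B : ℝ} (hA : 0 < A) (hB : 0 < B) (t : ℝ) : 0 < trigQuad A B t := by
  have h := sin_sq_add_cos_sq t
  unfold trigQuad
  rcases le_total A B with hAB | hBA
  · nlinarith [mul_le_mul_of_nonneg_right hAB (sq_nonneg (sin t))]
  · nlinarith [mul_le_mul_of_nonneg_right hBA (sq_nonneg (cos t))]

lemma continuous_trigQuad (A B : ℝ) : Continuous (trigQuad A B) := by
  unfold trigQuad; fun_prop

lemma continuous_inv_sqrt_trigQuad {A B : ℝ} (hA : 0 < A) (hB : 0 < B) :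
    Continuous fun t => (√(trigQuad A B t))⁻¹ :=
  (continuous_trigQuad A B).sqrt.inv₀ fun t => (sqrt_pos.2 (trigQuad_pos hA hB t)).ne'

lemma hasDerivAt_trigQuad (A B t : ℝ) :
    HasDerivAt (trigQuad A B) (2 * (B - A) * sin t * cos t) t :=
  ((((hasDerivAt_cos t).pow 2).const_mul A).add
    (((hasDerivAt_sin t).pow 2).const_mul B)).congr_deriv (by norm_num; ring)

lemma trigQuad_pi_div_two_sub (A B t : ℝ) : trigQuad A B (π / 2 - t) = trigQuad B A t := by
  simp only [trigQuad, cos_pi_div_two_sub, sin_pi_div_two_sub]; ring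

lemma trigQuad_pi_sub (A B t : ℝ) : trigQuad A B (π - t) = trigQuad A B t := by
  simp only [trigQuad, cos_pi_sub, sin_pi_sub, neg_sq]

lemma integral_comp_trigQuad_comm (f : ℝ → ℝ) (A B : ℝ) :
    ∫ t in (0:ℝ)..π / 2, f (trigQuad A B t)
      = ∫ t in (0:ℝ)..π / 2, f (trigQuad B A t) := by
  simpa [trigQuad_pi_div_two_sub] using
    integral_comp_sub_left (fun t => f (trigQuad B A t)) (π / 2) (a := 0) (b := π / 2)

lemma arcIntegral_comm (A B : ℝ) : arcIntegral A B = arcIntegral B A :=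
  integral_comp_trigQuad_comm (fun x => √x) A B

lemma invArcIntegral_comm (A B : ℝ) : invArcIntegral A B = invArcIntegral B A :=
  integral_comp_trigQuad_comm (fun x => (√x)⁻¹) A B

lemma hasDerivAt_mul_sin_mul_cos (a t : ℝ) :
    HasDerivAt (fun t => a * sin t * cos t) (a * (cos t ^ 2 - sin t ^ 2)) t :=
  (((hasDerivAt_sin t).const_mul a).mul (hasDerivAt_cos t)).congr_deriv (by ring)

lemma integral_zero_pi_eq_two_mul_of_symm {f : ℝ → ℝ} (hf : IntervalIntegrable f volume 0 π)
    (hsymm : ∀ u, f (π - u) = f u) :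
    ∫ u in (0:ℝ)..π, f u = 2 * ∫ u in (0:ℝ)..π / 2, f u := by
  have hhalf : ∫ u in π / 2..π, f u = ∫ u in (0:ℝ)..π / 2, f u := by
    simpa [hsymm, show π - π / 2 = π / 2 by ring] using
      (integral_comp_sub_left f π (a := 0) (b := π / 2)).symm
  have hsub : uIcc 0 (π / 2) ⊆ uIcc 0 π ∧ uIcc (π / 2) π ⊆ uIcc 0 π := by
    constructor <;> apply uIcc_subset_uIcc <;> simp [pi_pos.le, pi_div_two_pos.le]
  rw [← integral_add_adjacent_intervals (hf.mono_set hsub.1) (hf.mono_set hsub.2), hhalf, two_mul]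

lemma mul_ellipticE {a : ℝ} (ha : 0 ≤ a) (k : ℝ) :
    a * ellipticE k = arcIntegral (a ^ 2) (a ^ 2 * (1 - k ^ 2)) := by
  rw [ellipticE, arcIntegral, ← intervalIntegral.integral_const_mul]
  refine integral_congr fun t _ => ?_
  have h : trigQuad (a ^ 2) (a ^ 2 * (1 - k ^ 2)) t = a ^ 2 * (1 - k ^ 2 * sin t ^ 2) := by
    rw [trigQuad, cos_sq']; ring
  simp only [h, sqrt_mul (sq_nonneg a), sqrt_sq ha]

lemma mul_ellipticE_sqrt_sub_div {a b : ℝ} (ha : 0 < a) (hba : b ^ 2 ≤ a ^ 2) :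
    a * ellipticE (√(a ^ 2 - b ^ 2) / a) = arcIntegral (a ^ 2) (b ^ 2) := by
  rw [mul_ellipticE ha.le, div_pow, sq_sqrt (sub_nonneg.2 hba)]
  congr 1; field_simp; ring

lemma mul_ellipticE_sub_div_add {m n : ℝ} (h : 0 < m + n) :
    (m + n) * ellipticE ((m - n) / (m + n)) = arcIntegral ((m + n) ^ 2) (4 * m * n) := by
  rw [mul_ellipticE h.le]; congr 1; field_simp; ring

/-- No integrability is assumed: a monotone change of variables relates the Lebesgue integrals
themselves, so this also applies to integrands with a singularity at `c`. -/
lemma integral_comp_mul_sin (f : ℝ → ℝ) {c : ℝ} (hc : 0 ≤ c) :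
    ∫ p in (0:ℝ)..c, f p = ∫ θ in (0:ℝ)..π / 2, c * cos θ * f (c * sin θ) := by
  have h := integral_deriv_smul_comp_of_deriv_nonneg (g := f) (a := 0) (b := π / 2)
    (f := fun θ => c * sin θ) (f' := fun θ => c * cos θ) (by fun_prop)
    (fun θ _ => (hasDerivAt_sin θ).const_mul c)
    (fun θ hθ => mul_nonneg hc (cos_nonneg_of_mem_Icc ?_))
  · simpa using h.symm
  · simp only [pi_div_two_pos.le, min_eq_left, max_eq_right, mem_Ioo] at hθ
    constructor <;> linarith [pi_pos]

lemma integral_sq_div_sqrt_eq_arcIntegral {A c : ℝ} (hA : 0 < A) (hc : 0 < c) :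
    ∫ p in (0:ℝ)..c, p ^ 2 / √((c ^ 2 - p ^ 2) * (A + p ^ 2))
      = arcIntegral A (A + c ^ 2) - A * invArcIntegral A (A + c ^ 2) := by
  have hQ := trigQuad_pos hA (by positivity : 0 < A + c ^ 2)
  have hsqrt := (continuous_trigQuad A (A + c ^ 2)).sqrt
  have hinv : Continuous fun t => A * (√(trigQuad A (A + c ^ 2) t))⁻¹ :=
    continuous_const.mul (continuous_inv_sqrt_trigQuad hA (by positivity))
  rw [arcIntegral, invArcIntegral, ← intervalIntegral.integral_const_mul,
    ← integral_sub (hsqrt.intervalIntegrable _ _) (hinv.intervalIntegrable _ _),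
    integral_comp_mul_sin _ hc.le, integral_of_le pi_div_two_pos.le,
    integral_of_le pi_div_two_pos.le, integral_Ioc_eq_integral_Ioo, integral_Ioc_eq_integral_Ioo]
  refine setIntegral_congr_fun measurableSet_Ioo fun θ hθ => ?_
  have hcos : 0 < cos θ := cos_pos_of_mem_Ioo ⟨by linarith [hθ.1, pi_pos], hθ.2⟩
  have hrad : (c ^ 2 - (c * sin θ) ^ 2) * (A + (c * sin θ) ^ 2)
      = (c * cos θ) ^ 2 * trigQuad A (A + c ^ 2) θ := by
    simp only [trigQuad, mul_pow, cos_sq']; ring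
  have hpos := sqrt_pos.2 (hQ θ)
  rw [hrad, sqrt_mul (sq_nonneg _), sqrt_sq (by positivity)]
  field_simp
  rw [sq_sqrt (hQ θ).le, trigQuad, cos_sq']; ring

lemma landenAngle_zero (m n : ℝ) : landenAngle m n 0 = 0 := by
  simp [landenAngle]

lemma landenAngle_pi_div_two (m n : ℝ) : landenAngle m n (π / 2) = π := by
  simp [landenAngle]; ring

lemma one_add_sq_div_trigQuad {m n t : ℝ} (hD : trigQuad m n t ≠ 0) :
    1 + ((m - n) * sin t * cos t / trigQuad m n t) ^ 2
      = trigQuad (m ^ 2) (n ^ 2) t / trigQuad m n t ^ 2 := by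
  field_simp
  unfold trigQuad
  linear_combination (m ^ 2 * cos t ^ 2 + n ^ 2 * sin t ^ 2) * sin_sq_add_cos_sq t

section Landen

variable {m n : ℝ} (hm : 0 < m) (hn : 0 < n)
include hm hn

lemma hasDerivAt_landenAngle (t : ℝ) :
    HasDerivAt (landenAngle m n) ((m + n) * trigQuad m n t / trigQuad (m ^ 2) (n ^ 2) t) t := by
  have hD := trigQuad_pos hm hn t
  have hR := trigQuad_pos (pow_pos hm 2) (pow_pos hn 2) t
  refine (((hasDerivAt_id t).const_mul 2).sub ((hasDerivAt_mul_sin_mul_cos (m - n) t).div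
    (hasDerivAt_trigQuad m n t) hD.ne').arctan).congr_deriv ?_
  simp only [Pi.div_apply, one_add_sq_div_trigQuad hD.ne']
  field_simp
  unfold trigQuad
  linear_combination
    (m * n * cos t ^ 2 + m * n * sin t ^ 2 - m ^ 2 * cos t ^ 2 - n ^ 2 * sin t ^ 2)
      * sin_sq_add_cos_sq t

lemma sin_landenAngle (t : ℝ) :
    sin (landenAngle m n t) = (m + n) * sin t * cos t / √(trigQuad (m ^ 2) (n ^ 2) t) := by
  have hD := trigQuad_pos hm hn t
  have hq := sqrt_pos.2 (trigQuad_pos (pow_pos hm 2) (pow_pos hn 2) t)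
  rw [landenAngle, sin_sub, sin_arctan, cos_arctan, one_add_sq_div_trigQuad hD.ne',
    sqrt_div' _ (sq_nonneg _), sqrt_sq hD.le, sin_two_mul, cos_two_mul']
  field_simp
  unfold trigQuad
  linear_combination (m + n) * sin t * cos t * sin_sq_add_cos_sq t

lemma sqrt_trigQuad_landenAngle (t : ℝ) :
    √(trigQuad ((m + n) ^ 2) (4 * m * n) (landenAngle m n t))
      = (m + n) * trigQuad m n t / √(trigQuad (m ^ 2) (n ^ 2) t) := by
  have hD := trigQuad_pos hm hn t
  have hR := trigQuad_pos (pow_pos hm 2) (pow_pos hn 2) t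
  have h : trigQuad ((m + n) ^ 2) (4 * m * n) (landenAngle m n t)
      = ((m + n) * trigQuad m n t / √(trigQuad (m ^ 2) (n ^ 2) t)) ^ 2 := by
    rw [trigQuad, cos_sq', sin_landenAngle hm hn, div_pow, div_pow, sq_sqrt hR.le]
    field_simp
    unfold trigQuad
    linear_combination -(m ^ 2 * cos t ^ 2 + n ^ 2 * sin t ^ 2) * sin_sq_add_cos_sq t
  rw [h, sqrt_sq (by positivity)]

lemma hasDerivAt_landenCorrection (t : ℝ) :
    HasDerivAt (fun t => (n ^ 2 - m ^ 2) * sin t * cos t / √(trigQuad (m ^ 2) (n ^ 2) t))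
      ((m + n) * trigQuad m n t / trigQuad (m ^ 2) (n ^ 2) t *
          (√(trigQuad ((m + n) ^ 2) (4 * m * n) (landenAngle m n t))
            - 2 * m * n * (√(trigQuad ((m + n) ^ 2) (4 * m * n) (landenAngle m n t)))⁻¹)
        - 2 * √(trigQuad (m ^ 2) (n ^ 2) t)) t := by
  have hD := trigQuad_pos hm hn t
  have hR := trigQuad_pos (pow_pos hm 2) (pow_pos hn 2) t
  have hq := sqrt_pos.2 hR
  refine ((hasDerivAt_mul_sin_mul_cos _ t).div ((hasDerivAt_trigQuad _ _ t).sqrt hR.ne')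
    hq.ne').congr_deriv ?_
  rw [sqrt_trigQuad_landenAngle hm hn]
  field_simp
  rw [sq_sqrt hR.le]
  unfold trigQuad
  linear_combination
    -2 * m * n * (m ^ 2 * cos t ^ 2 + n ^ 2 * sin t ^ 2) ^ 2 * sin_sq_add_cos_sq t

lemma integral_landen_eq_two_mul_arcIntegral :
    ∫ u in (0:ℝ)..π, (√(trigQuad ((m + n) ^ 2) (4 * m * n) u)
        - 2 * m * n * (√(trigQuad ((m + n) ^ 2) (4 * m * n) u))⁻¹)
      = 2 * arcIntegral (m ^ 2) (n ^ 2) := by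
  set F : ℝ → ℝ := fun u => √(trigQuad ((m + n) ^ 2) (4 * m * n) u)
    - 2 * m * n * (√(trigQuad ((m + n) ^ 2) (4 * m * n) u))⁻¹
  have hR := trigQuad_pos (pow_pos hm 2) (pow_pos hn 2)
  have hFc : Continuous F := (continuous_trigQuad _ _).sqrt.sub
    (continuous_const.mul (continuous_inv_sqrt_trigQuad (by positivity) (by positivity)))
  have hψ : Continuous (landenAngle m n) :=
    continuous_iff_continuousAt.2 fun t => (hasDerivAt_landenAngle hm hn t).continuousAt
  have hψ' : Continuous fun t => (m + n) * trigQuad m n t / trigQuad (m ^ 2) (n ^ 2) t :=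
    (continuous_const.mul (continuous_trigQuad m n)).div (continuous_trigQuad _ _)
      fun t => (hR t).ne'
  have hlhs : Continuous fun t =>
      (m + n) * trigQuad m n t / trigQuad (m ^ 2) (n ^ 2) t * F (landenAngle m n t) :=
    hψ'.mul (hFc.comp hψ)
  have hsqrtR : Continuous fun t => 2 * √(trigQuad (m ^ 2) (n ^ 2) t) :=
    continuous_const.mul (continuous_trigQuad _ _).sqrt
  have hsubst : ∫ t in (0:ℝ)..π / 2,
      (m + n) * trigQuad m n t / trigQuad (m ^ 2) (n ^ 2) t * F (landenAngle m n t)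
        = ∫ u in (0:ℝ)..π, F u := by
    simpa [landenAngle_zero, landenAngle_pi_div_two] using
      integral_deriv_smul_comp (a := 0) (b := π / 2)
        (fun t _ => hasDerivAt_landenAngle hm hn t) hψ'.continuousOn hFc
  have hcorr : ∫ t in (0:ℝ)..π / 2,
      ((m + n) * trigQuad m n t / trigQuad (m ^ 2) (n ^ 2) t * F (landenAngle m n t)
        - 2 * √(trigQuad (m ^ 2) (n ^ 2) t)) = 0 := by
    rw [integral_eq_sub_of_hasDerivAt (fun t _ => hasDerivAt_landenCorrection hm hn t)
      ((hlhs.sub hsqrtR).intervalIntegrable _ _)]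
    simp
  rw [integral_sub (hlhs.intervalIntegrable _ _) (hsqrtR.intervalIntegrable _ _), hsubst,
    intervalIntegral.integral_const_mul, sub_eq_zero] at hcorr
  rw [hcorr, arcIntegral]

theorem arcIntegral_landen :
    arcIntegral (m ^ 2) (n ^ 2) = arcIntegral ((m + n) ^ 2) (4 * m * n)
      - 2 * m * n * invArcIntegral ((m + n) ^ 2) (4 * m * n) := by
  have hsqrt := (continuous_trigQuad ((m + n) ^ 2) (4 * m * n)).sqrt
  have hinv : Continuous fun u => 2 * m * n * (√(trigQuad ((m + n) ^ 2) (4 * m * n) u))⁻¹ :=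
    continuous_const.mul (continuous_inv_sqrt_trigQuad (by positivity) (by positivity))
  have hF : Continuous fun u => √(trigQuad ((m + n) ^ 2) (4 * m * n) u)
      - 2 * m * n * (√(trigQuad ((m + n) ^ 2) (4 * m * n) u))⁻¹ := hsqrt.sub hinv
  have h := integral_landen_eq_two_mul_arcIntegral hm hn
  rw [integral_zero_pi_eq_two_mul_of_symm (hF.intervalIntegrable _ _)
      fun u => by simp only [trigQuad_pi_sub],
    integral_sub (hsqrt.intervalIntegrable _ _) (hinv.intervalIntegrable _ _),
    intervalIntegral.integral_const_mul, ← arcIntegral, ← invArcIntegral] at h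
  linarith

end Landen

/-- Landen's limit excess theorem: the limit hyperbolic excess of the hyperbola
with semiaxes `m − n` and `2√(mn)` equals `2S₂ − S₁`, where `S₂` and `S₁` are the
quadrantal arcs of the two auxiliary ellipses. -/
theorem landen_limit_excess (m n : ℝ) (hn : 0 < n) (hmn : n < m) :
    ∫ p in (0:ℝ)..(m - n),
        p ^ 2 / Real.sqrt (4 * m * n * (m - n) ^ 2
          + ((m - n) ^ 2 - 4 * m * n) * p ^ 2 - p ^ 4)
      = 2 * m * ellipticE (Real.sqrt (m ^ 2 - n ^ 2) / m)
        - (m + n) * ellipticE ((m - n) / (m + n)) := by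
  have hm : 0 < m := hn.trans hmn
  have hrad : ∀ p : ℝ, 4 * m * n * (m - n) ^ 2 + ((m - n) ^ 2 - 4 * m * n) * p ^ 2 - p ^ 4
      = ((m - n) ^ 2 - p ^ 2) * (4 * m * n + p ^ 2) := fun p => by ring
  simp only [hrad]
  rw [integral_sq_div_sqrt_eq_arcIntegral (by positivity) (sub_pos.2 hmn),
    show 4 * m * n + (m - n) ^ 2 = (m + n) ^ 2 by ring, arcIntegral_comm, invArcIntegral_comm,
    mul_assoc 2 m, mul_ellipticE_sqrt_sub_div hm (by nlinarith),
    mul_ellipticE_sub_div_add (by linarith), arcIntegral_landen hm hn]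
  ring
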